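/- arXiv:2208.12949 — 2 statements merged into one kernel-verified Lean document; each statement's English description precedes it below -/
import Mathlib

section
/- Let λ be the unique real root in [3,4] of x³ - 3x² - x - 1. For every α > 0 it holds that (1+α)²·α²·λ⁴ ≥ λ·(1 + αλ²)·α²·(λ² + α). -/
theorem key_inequality (l : ℝ) (hl : l ∈ Set.Icc (3:ℝ) 4)
    (hroot : l^3 - 3*l^2 - l - 1 = 0) :
    ∀ α : ℝ, 0 < α →
      (1 + α)^2 * α^2 * l^4 ≥ l * (1 + α * l^2) * α^2 * (l^2 + α) := by
  intro α hα
  obtain ⟨h3, h4⟩ := hl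
  have h1 : (1 + α)^2 * α^2 * l^4 - l * (1 + α * l^2) * α^2 * (l^2 + α)
      = l^3*(l-1)*(α^2-α)^2 := by
    linear_combination (-α^3*l*(l-1)) * hroot
  nlinarith [mul_nonneg (mul_nonneg (pow_nonneg (by linarith : (0:ℝ) ≤ l) 3)
    (by linarith : (0:ℝ) ≤ l - 1)) (sq_nonneg (α^2 - α))]
end

section
/- A geometric distribution cannot be written as a nontrivial convex combination of distinct geometric distributions: if α, α₁, α₂ ∈ (0,∞), t ∈ (0,1), and for all k ∈ ℤ≥0, (1-e^{-α})e^{-kα} = t·(1-e^{-α₁})e^{-kα₁} + (1-t)·(1-e^{-α₂})e^{-kα₂}, then α₁ = α₂ = α. -/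
theorem geometric_extremal (α α₁ α₂ t : ℝ)
    (hα : 0 < α) (hα₁ : 0 < α₁) (hα₂ : 0 < α₂) (ht : t ∈ Set.Ioo (0:ℝ) 1)
    (h : ∀ k : ℕ,
      (1 - Real.exp (-α)) * Real.exp (-(k:ℝ) * α) =
        t * ((1 - Real.exp (-α₁)) * Real.exp (-(k:ℝ) * α₁)) +
        (1 - t) * ((1 - Real.exp (-α₂)) * Real.exp (-(k:ℝ) * α₂))) :
    α₁ = α ∧ α₂ = α := by
  obtain ⟨ht0, ht1⟩ := ht
  set q := Real.exp (-α) with hq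
  set q₁ := Real.exp (-α₁) with hq₁
  set q₂ := Real.exp (-α₂) with hq₂
  have hqlt : q < 1 := Real.exp_lt_one_iff.mpr (by linarith)
  have hq1lt : q₁ < 1 := Real.exp_lt_one_iff.mpr (by linarith)
  have hq2lt : q₂ < 1 := Real.exp_lt_one_iff.mpr (by linarith)
  have hexp2 : ∀ x : ℝ, Real.exp (-(2:ℝ) * x) = Real.exp (-x) * Real.exp (-x) := by
    intro x; rw [← Real.exp_add]; ring_nf
  have h0 := h 0
  have h1 := h 1
  have h2 := h 2
  simp only [Nat.cast_zero, Nat.cast_one, Nat.cast_ofNat, neg_zero, zero_mul, one_mul,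
    Real.exp_zero, mul_one, neg_one_mul] at h0 h1 h2
  rw [hexp2 α, hexp2 α₁, hexp2 α₂] at h2
  rw [← hq, ← hq₁, ← hq₂] at h1 h2
  -- Cauchy-Schwarz-type identity forces q₁ = q₂
  have key : t * (1 - q₁) * ((1 - t) * (1 - q₂)) * (q₁ - q₂) ^ 2 = 0 := by
    linear_combination (-(t * ((1 - q₁) * (q₁ * q₁)) + (1 - t) * ((1 - q₂) * (q₂ * q₂)))) * h0
      + ((1 - q) * q + (t * ((1 - q₁) * q₁) + (1 - t) * ((1 - q₂) * q₂))) * h1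
      + (-(1 - q)) * h2
  have hq12 : q₁ = q₂ := by
    have ha : 0 < t * (1 - q₁) := mul_pos ht0 (by linarith)
    have hb : 0 < (1 - t) * (1 - q₂) := mul_pos (by linarith) (by linarith)
    have hsq : (q₁ - q₂) ^ 2 = 0 := by
      rcases mul_eq_zero.mp key with h' | h'
      · exact absurd h' (ne_of_gt (mul_pos ha hb))
      · exact h'
    have := sq_eq_zero_iff.mp hsq
    linarith
  have hq1q : q₁ = q := by nlinarith [h0, hq12]
  have e1 : α₁ = α := by
    have := Real.exp_eq_exp.mp (hq₁ ▸ hq ▸ hq1q)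
    linarith
  refine ⟨e1, ?_⟩
  have : q₂ = q := hq12 ▸ hq1q
  have := Real.exp_eq_exp.mp (hq₂ ▸ hq ▸ this)
  linarith
end
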